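/- Let P and Q be polytopes in ℝ^d. Then P has a summand homothetic to Q if and only if P and P + Q have the same number of vertices, i.e., f0(P) = f0(P + Q). -/

import Mathlib

open Pointwise
open scoped RealInnerProductSpace

noncomputable section

abbrev Esp (d : ℕ) := EuclideanSpace ℝ (Fin d)

def IsPolytope {d : ℕ} (P : Set (Esp d)) : Prop :=
  ∃ s : Finset (Esp d), s.Nonempty ∧ P = convexHull ℝ (s : Set (Esp d))

def polyFace {d : ℕ} (P : Set (Esp d)) (c : Esp d) : Set (Esp d) :=
  {x | x ∈ P ∧ ∀ y ∈ P, ⟪c, x⟫ ≤ ⟪c, y⟫}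

def polyVerts {d : ℕ} (P : Set (Esp d)) : Set (Esp d) :=
  Set.extremePoints ℝ P

def f0 {d : ℕ} (P : Set (Esp d)) : ℕ := (polyVerts P).ncard

def polyAdj {d : ℕ} (P : Set (Esp d)) (u v : Esp d) : Prop :=
  u ≠ v ∧ u ∈ polyVerts P ∧ v ∈ polyVerts P ∧
    ∃ c : Esp d, polyFace P c = segment ℝ u v

def polyGraph {d : ℕ} (P : Set (Esp d)) : SimpleGraph (Esp d) where
  Adj u v := polyAdj P u v
  symm := ⟨by
    rintro u v ⟨hne, hu, hv, c, hc⟩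
    exact ⟨hne.symm, hv, hu, c, by rw [hc, segment_symm]⟩⟩
  loopless := ⟨by rintro u ⟨hne, -⟩; exact hne rfl⟩

def polyDiam {d : ℕ} (P : Set (Esp d)) : ℕ :=
  sSup {n : ℕ | ∃ u ∈ polyVerts P, ∃ v ∈ polyVerts P, n = (polyGraph P).dist u v}

def polyDim {d : ℕ} (P : Set (Esp d)) : ℕ :=
  Module.finrank ℝ (affineSpan ℝ P).direction

def IsFace {d : ℕ} (P F : Set (Esp d)) : Prop := ∃ c : Esp d, polyFace P c = F

def gammaVerts {d : ℕ} (P Q : Set (Esp d)) (u : Esp d) : Set (Esp d) :=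
  {w ∈ polyVerts (P + Q) | ∃ v ∈ polyVerts Q, w = u + v}

/-!
A vertex of `P + Q` decomposes uniquely as `p + q` with `p`, `q` vertices of `P`, `Q`, and every
vertex `p` of `P` occurs: take for `q` an extreme point of the face of `Q` on which a functional
exposing `p` is minimal. Hence `f0 P ≤ f0 (P + Q)`, with equality iff each vertex `p` has a unique
partner `q`. Perturbing the exposing functional shows that uniqueness means that every functional
minimal at `p` on `P` is minimal at `q` on `Q`: the normal fan of `P` refines that of `Q`. This is
clearly necessary for `P = α • Q + R`. Conversely, Farkas' lemma turns the refinement into a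
constant `α > 0` with `α ⟪c, q p' - q p⟫ ≤ ⟪c, p' - p⟫` whenever `c` is minimal at `p`, and then
`P = α • Q + conv {p - α • q p}`, as both sides have the same minimum in every direction.
-/

namespace PointedCone

section Module

variable {E : Type*} [AddCommGroup E] [Module ℝ E]

lemma mem_hull_finset_iff {t : Finset E} {x : E} :
    x ∈ hull ℝ (t : Set E) ↔ ∃ μ : E → ℝ, (∀ v ∈ t, 0 ≤ μ v) ∧ ∑ v ∈ t, μ v • v = x := by
  rw [Submodule.mem_span_finset]
  constructor
  · rintro ⟨f, -, rfl⟩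
    exact ⟨fun v => f v, fun v _ => (f v).2, by simp only [Nonneg.coe_smul]⟩
  · rintro ⟨μ, hμ, rfl⟩
    classical
    refine ⟨fun v => if hv : v ∈ t then ⟨μ v, hμ v hv⟩ else 0, fun v hv => ?_, ?_⟩
    · by_contra hvt
      exact hv (dif_neg hvt)
    · refine Finset.sum_congr rfl fun v hv => ?_
      simp only [dif_pos hv, Nonneg.mk_smul]

/-- Carathéodory's theorem for cones. -/
lemma exists_linearIndepOn_of_mem_hull [DecidableEq E] (t : Finset E) {x : E}
    (hx : x ∈ hull ℝ (t : Set E)) :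
    ∃ s ⊆ t, LinearIndepOn ℝ id (s : Set E) ∧ x ∈ hull ℝ (s : Set E) := by
  induction t using Finset.strongInduction generalizing x with
  | H t ih =>
  by_cases hind : LinearIndepOn ℝ id (t : Set E)
  · exact ⟨t, subset_rfl, hind, hx⟩
  obtain ⟨g, hg, v₀, hv₀, hgv₀⟩ := not_linearIndepOn_finset_iff.1 hind
  obtain ⟨μ, hμ, rfl⟩ := mem_hull_finset_iff.1 hx
  obtain ⟨w, hw, hwmin⟩ := (t.filter (g · ≠ 0)).exists_min_image (fun v => μ v / |g v|)
    ⟨v₀, Finset.mem_filter.2 ⟨hv₀, hgv₀⟩⟩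
  obtain ⟨hwt, hgw⟩ := Finset.mem_filter.1 hw
  -- shifting along the relation `g` by `μ w / g w` kills the coefficient of `w` and keeps the
  -- others nonnegative, by the choice of `w`
  set r := μ w / g w
  have hcoeff : ∀ v ∈ t, 0 ≤ μ v - r * g v := by
    intro v hv
    rcases eq_or_ne (g v) 0 with hgv | hgv
    · simpa [hgv] using hμ v hv
    have hle : μ w / |g w| ≤ μ v / |g v| := hwmin v (Finset.mem_filter.2 ⟨hv, hgv⟩)
    have : |r * g v| ≤ μ v := by
      rw [abs_mul, abs_div, abs_of_nonneg (hμ w hwt)]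
      rwa [le_div_iff₀ (abs_pos.2 hgv)] at hle
    linarith [le_abs_self (r * g v)]
  have hsum : ∑ v ∈ t, μ v • v = ∑ v ∈ t.erase w, (μ v - r * g v) • v := by
    rw [Finset.sum_erase _ (by simp [r, div_mul_cancel₀ _ hgw])]
    have hg' : ∑ v ∈ t, g v • v = 0 := hg
    simp only [sub_smul, Finset.sum_sub_distrib, mul_smul, ← Finset.smul_sum, hg', smul_zero,
      sub_zero]
  obtain ⟨s, hs, hsind, hxs⟩ := ih (t.erase w) (Finset.erase_ssubset hwt)
    (mem_hull_finset_iff.2 ⟨_, fun v hv => hcoeff v (Finset.mem_of_mem_erase hv), hsum.symm⟩)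
  exact ⟨s, hs.trans (Finset.erase_subset _ _), hsind, hxs⟩

end Module

section Normed

variable {E : Type*} [NormedAddCommGroup E] [NormedSpace ℝ E]

lemma isClosed_hull_of_linearIndepOn {s : Finset E} (hs : LinearIndepOn ℝ id (s : Set E)) :
    IsClosed (hull ℝ (s : Set E) : Set E) := by
  let T := Fintype.linearCombination ℝ (fun v : s => (v : E))
  have hT : Topology.IsClosedEmbedding T := LinearMap.isClosedEmbedding_of_injective
    (LinearMap.ker_eq_bot.2 (linearIndependent_iff_injective_fintypeLinearCombination.1 hs))
  have : (hull ℝ (s : Set E) : Set E) = T '' Set.Ici 0 := by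
    ext x
    rw [SetLike.mem_coe, Submodule.mem_span_finset']
    constructor
    · rintro ⟨f, rfl⟩
      exact ⟨fun v => f v, fun v => (f v).2, by simp [T, Fintype.linearCombination_apply]⟩
    · rintro ⟨μ, hμ, rfl⟩
      exact ⟨fun v => ⟨μ v, hμ v⟩, by simp [T, Fintype.linearCombination_apply]⟩
  rw [this]
  exact hT.isClosedMap _ isClosed_Ici

lemma isClosed_hull_finset (t : Finset E) : IsClosed (hull ℝ (t : Set E) : Set E) := by
  classical
  let I := t.powerset.filter fun s : Finset E => LinearIndepOn ℝ id (s : Set E)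
  have : (hull ℝ (t : Set E) : Set E) = ⋃ s ∈ I, (hull ℝ (s : Set E) : Set E) := by
    refine Set.Subset.antisymm (fun x hx => ?_) (Set.iUnion₂_subset fun s hs => ?_)
    · obtain ⟨s, hst, hs, hxs⟩ := exists_linearIndepOn_of_mem_hull t hx
      exact Set.mem_biUnion (Finset.mem_filter.2 ⟨Finset.mem_powerset.2 hst, hs⟩) hxs
    · exact Submodule.span_mono
        (Finset.coe_subset.2 (Finset.mem_powerset.1 (Finset.mem_filter.1 hs).1))
  rw [this]
  exact isClosed_biUnion_finset fun s hs =>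
    isClosed_hull_of_linearIndepOn (Finset.mem_filter.1 hs).2

end Normed

section Inner

variable {E : Type*} [NormedAddCommGroup E] [InnerProductSpace ℝ E]

/-- Farkas' lemma. -/
theorem mem_hull_of_forall_inner_nonpos [CompleteSpace E] {t : Finset E} {v : E}
    (h : ∀ c : E, (∀ u ∈ t, ⟪c, u⟫ ≤ 0) → ⟪c, v⟫ ≤ 0) : v ∈ hull ℝ (t : Set E) := by
  by_contra hv
  obtain ⟨y, hyC, hyv⟩ :=
    ProperCone.hyperplane_separation' ⟨hull ℝ (t : Set E), isClosed_hull_finset t⟩ hv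
  have := h (-y) fun u hu => by
    simpa [real_inner_comm] using hyC u (subset_hull (Finset.mem_coe.2 hu))
  simp only [inner_neg_left, neg_nonpos, real_inner_comm] at this
  linarith

lemma eventually_inner_le_mul_of_mem_hull {t : Finset E} {v : E}
    (hv : v ∈ hull ℝ (t : Set E)) :
    ∀ᶠ β in Filter.atTop, ∀ c : E, ∀ D : ℝ, 0 ≤ D → (∀ u ∈ t, ⟪c, u⟫ ≤ D) → ⟪c, v⟫ ≤ β * D := by
  obtain ⟨μ, hμ, rfl⟩ := mem_hull_finset_iff.1 hv
  filter_upwards [Filter.eventually_ge_atTop (∑ u ∈ t, μ u)] with β hβ c D hD hc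
  calc ⟪c, ∑ u ∈ t, μ u • u⟫ = ∑ u ∈ t, μ u * ⟪c, u⟫ := by
        simp only [inner_sum, real_inner_smul_right]
    _ ≤ ∑ u ∈ t, μ u * D :=
        Finset.sum_le_sum fun u hu => mul_le_mul_of_nonneg_left (hc u hu) (hμ u hu)
    _ = (∑ u ∈ t, μ u) * D := (Finset.sum_mul _ _ _).symm
    _ ≤ β * D := mul_le_mul_of_nonneg_right hβ hD

end Inner

end PointedCone

section Convex

variable {E : Type*} [NormedAddCommGroup E] [InnerProductSpace ℝ E]

lemma exists_inner_le_of_mem_convexHull {s : Set E} {x : E} (hx : x ∈ convexHull ℝ s) (c : E) :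
    ∃ v ∈ s, ⟪c, v⟫ ≤ ⟪c, x⟫ :=
  ((innerₛₗ ℝ c).concaveOn convex_univ).exists_le_of_mem_convexHull (Set.subset_univ _) hx

lemma subset_of_forall_exists_inner_le [CompleteSpace E] {A B : Set E} (hB : Convex ℝ B)
    (hBc : IsClosed B) (h : ∀ c : E, ∀ a ∈ A, ∃ b ∈ B, ⟪c, b⟫ ≤ ⟪c, a⟫) : A ⊆ B := by
  intro x hx
  by_contra hxB
  obtain ⟨f, u, hfx, hfB⟩ := geometric_hahn_banach_point_closed hB hBc hxB
  obtain ⟨b, hb, hbx⟩ := h ((InnerProductSpace.toDual ℝ E).symm f) x hx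
  simp only [InnerProductSpace.toDual_symm_apply] at hbx
  linarith [hfB b hb]

end Convex

section Minkowski

variable {E : Type*} [AddCommGroup E] [Module ℝ E] {A B : Set E}

lemma eq_of_add_mem_extremePoints {a a' b b' : E} (hy : a + b ∈ (A + B).extremePoints ℝ)
    (ha' : a' ∈ A) (hb' : b' ∈ B) (ha : a ∈ A) (hb : b ∈ B) (h : a' + b' = a + b) :
    a' = a ∧ b' = b := by
  -- `a + b` is the midpoint of `a + b'` and `a' + b`
  have hmid : a + b ∈ openSegment ℝ (a + b') (a' + b) :=
    ⟨1 / 2, 1 / 2, by norm_num, by norm_num, by norm_num, by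
      linear_combination (norm := module) (1 / 2 : ℝ) • h⟩
  obtain ⟨h₁, h₂⟩ := (mem_extremePoints.1 hy).2 _ (Set.add_mem_add ha hb') _
    (Set.add_mem_add ha' hb) hmid
  exact ⟨add_right_cancel h₂, add_left_cancel h₁⟩

lemma mem_extremePoints_of_add_mem_extremePoints_left {a b : E}
    (hy : a + b ∈ (A + B).extremePoints ℝ) (ha : a ∈ A) (hb : b ∈ B) : a ∈ A.extremePoints ℝ := by
  refine ⟨ha, fun x hx x' hx' hseg => ?_⟩
  rw [← mem_openSegment_translate ℝ b, add_comm b, add_comm b, add_comm b] at hseg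
  exact add_right_cancel (hy.2 (Set.add_mem_add hx hb) (Set.add_mem_add hx' hb) hseg)

lemma add_mem_extremePoints_singleton_add {a b : E} (hb : b ∈ B.extremePoints ℝ) :
    a + b ∈ ({a} + B).extremePoints ℝ := by
  rw [Set.singleton_add]
  refine ⟨Set.mem_image_of_mem _ hb.1, ?_⟩
  rintro _ ⟨x, hx, rfl⟩ _ ⟨x', hx', rfl⟩ hseg
  rw [hb.2 hx hx' ((mem_openSegment_translate ℝ a).1 hseg)]

end Minkowski

section Faces

variable {d : ℕ} {P Q : Set (Esp d)} {c : Esp d}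

lemma isExposed_polyFace (P : Set (Esp d)) (c : Esp d) : IsExposed ℝ P (polyFace P c) :=
  fun _ => ⟨-innerSL ℝ c, by ext x; simp [polyFace]⟩

lemma isExtreme_polyFace (P : Set (Esp d)) (c : Esp d) : IsExtreme ℝ P (polyFace P c) :=
  (isExposed_polyFace P c).isExtreme

lemma polyFace_add (P Q : Set (Esp d)) (c : Esp d) :
    polyFace (P + Q) c = polyFace P c + polyFace Q c := by
  ext x
  constructor
  · rintro ⟨⟨a, ha, b, hb, rfl⟩, hmin⟩
    refine Set.add_mem_add ⟨ha, fun y hy => ?_⟩ ⟨hb, fun y hy => ?_⟩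
    · simpa [inner_add_right] using hmin (y + b) (Set.add_mem_add hy hb)
    · simpa [inner_add_right] using hmin (a + y) (Set.add_mem_add ha hy)
  · rintro ⟨a, ha, b, hb, rfl⟩
    refine ⟨Set.add_mem_add ha.1 hb.1, ?_⟩
    rintro _ ⟨a', ha', b', hb', rfl⟩
    simpa only [inner_add_right] using add_le_add (ha.2 a' ha') (hb.2 b' hb')

lemma polyFace_smul {r : ℝ} (hr : 0 < r) (P : Set (Esp d)) (c : Esp d) :
    polyFace P (r • c) = polyFace P c := by
  ext x
  simp [polyFace, real_inner_smul_left, mul_le_mul_iff_right₀ hr]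

lemma polyFace_add_eq_inter {c₁ c₂ p : Esp d} (h₁ : p ∈ polyFace P c₁) (h₂ : p ∈ polyFace P c₂) :
    polyFace P (c₁ + c₂) = polyFace P c₁ ∩ polyFace P c₂ := by
  ext x
  constructor
  · rintro ⟨hx, hmin⟩
    have hsum := hmin p h₁.1
    simp only [inner_add_left] at hsum
    have e₁ : ⟪c₁, x⟫ ≤ ⟪c₁, p⟫ := by linarith [h₂.2 x hx]
    have e₂ : ⟪c₂, x⟫ ≤ ⟪c₂, p⟫ := by linarith [h₁.2 x hx]
    exact ⟨⟨hx, fun y hy => e₁.trans (h₁.2 y hy)⟩, hx, fun y hy => e₂.trans (h₂.2 y hy)⟩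
  · rintro ⟨⟨hx, hx₁⟩, -, hx₂⟩
    exact ⟨hx, fun y hy => by simpa only [inner_add_left] using add_le_add (hx₁ y hy) (hx₂ y hy)⟩

lemma mem_polyFace_of_forall_pos {c₀ x : Esp d} (h : ∀ ε > (0 : ℝ), x ∈ polyFace Q (c + ε • c₀)) :
    x ∈ polyFace Q c := by
  refine ⟨(h 1 one_pos).1, fun y hy => ?_⟩
  have hcont : Continuous fun ε : ℝ => ⟪c + ε • c₀, y - x⟫ := by fun_prop
  have : (0 : ℝ) ≤ ⟪c + (0 : ℝ) • c₀, y - x⟫ :=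
    ge_of_tendsto ((hcont.tendsto 0).mono_left nhdsWithin_le_nhds)
      (eventually_nhdsWithin_of_forall (s := Set.Ioi 0) fun ε hε => ?_)
  · simpa [inner_sub_right] using this
  · simpa [inner_sub_right] using (h ε hε).2 y hy

lemma mem_polyFace_of_smul_mem {α : ℝ} (hα : 0 < α) {w : Esp d} (h : α • w ∈ polyFace (α • Q) c) :
    w ∈ polyFace Q c := by
  refine ⟨(Set.smul_mem_smul_set_iff₀ hα.ne' Q w).1 h.1, fun y hy => ?_⟩
  have := h.2 _ (Set.smul_mem_smul_set hy)
  rw [real_inner_smul_right, real_inner_smul_right] at this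
  exact le_of_mul_le_mul_left this hα

lemma polyFace_eq_singleton_of_add {p q : Esp d} (h : polyFace (P + Q) c = {p + q}) (hp : p ∈ P)
    (hq : q ∈ Q) : polyFace P c = {p} ∧ polyFace Q c = {q} := by
  have hpq : p + q ∈ polyFace (P + Q) c := h ▸ rfl
  have hp' : p ∈ polyFace P c := ⟨hp, fun y hy => by
    simpa [inner_add_right] using hpq.2 (y + q) (Set.add_mem_add hy hq)⟩
  have hq' : q ∈ polyFace Q c := ⟨hq, fun y hy => by
    simpa [inner_add_right] using hpq.2 (p + y) (Set.add_mem_add hp hy)⟩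
  rw [polyFace_add] at h
  refine ⟨Set.eq_singleton_iff_unique_mem.2 ⟨hp', fun x hx => ?_⟩,
    Set.eq_singleton_iff_unique_mem.2 ⟨hq', fun y hy => ?_⟩⟩
  · exact add_right_cancel (h.subset (Set.add_mem_add hx hq'))
  · exact add_left_cancel (h.subset (Set.add_mem_add hp' hy))

lemma add_mem_polyVerts_of_polyFace_eq_singleton {p q : Esp d} (hp : polyFace P c = {p})
    (hq : q ∈ (polyFace Q c).extremePoints ℝ) : p + q ∈ polyVerts (P + Q) := by
  have := (isExtreme_polyFace (P + Q) c).extremePoints_subset_extremePoints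
  rw [polyFace_add, hp] at this
  exact this (add_mem_extremePoints_singleton_add hq)

end Faces

namespace IsPolytope

variable {d : ℕ} {P Q : Set (Esp d)} {p : Esp d}

lemma isCompact (hP : IsPolytope P) : IsCompact P := by
  obtain ⟨s, -, rfl⟩ := hP
  exact s.finite_toSet.isCompact_convexHull ℝ

lemma convex (hP : IsPolytope P) : Convex ℝ P := by
  obtain ⟨s, -, rfl⟩ := hP
  exact convex_convexHull ℝ _

lemma nonempty (hP : IsPolytope P) : P.Nonempty := by
  obtain ⟨s, hs, rfl⟩ := hP
  exact (Finset.coe_nonempty.2 hs).convexHull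

lemma finite_polyVerts (hP : IsPolytope P) : (polyVerts P).Finite := by
  obtain ⟨s, -, rfl⟩ := hP
  exact s.finite_toSet.subset extremePoints_convexHull_subset

lemma of_finite {s : Set (Esp d)} (hs : s.Finite) (hne : s.Nonempty) :
    IsPolytope (convexHull ℝ s) :=
  ⟨hs.toFinset, hs.toFinset_nonempty.2 hne, by rw [hs.coe_toFinset]⟩

lemma add (hP : IsPolytope P) (hQ : IsPolytope Q) : IsPolytope (P + Q) := by
  classical
  obtain ⟨s, hs, rfl⟩ := hP
  obtain ⟨t, ht, rfl⟩ := hQ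
  exact ⟨s + t, hs.add ht, by rw [Finset.coe_add, convexHull_add]⟩

lemma extremePoints_polyFace_nonempty (hP : IsPolytope P) (c : Esp d) :
    ((polyFace P c).extremePoints ℝ).Nonempty := by
  obtain ⟨x, hx, hmin⟩ := hP.isCompact.exists_isMinOn hP.nonempty
    (innerSL ℝ c).continuous.continuousOn
  exact ((isExposed_polyFace P c).isCompact hP.isCompact).extremePoints_nonempty
    ⟨x, hx, fun y hy => hmin hy⟩

lemma exists_mem_polyVerts_mem_polyFace (hP : IsPolytope P) (c : Esp d) :
    ∃ z ∈ polyVerts P, z ∈ polyFace P c :=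
  let ⟨z, hz⟩ := hP.extremePoints_polyFace_nonempty c
  ⟨z, (isExtreme_polyFace P c).extremePoints_subset_extremePoints hz, hz.1⟩

lemma mem_polyFace_of_forall_polyVerts (hP : IsPolytope P) {c : Esp d} (hp : p ∈ P)
    (h : ∀ v ∈ polyVerts P, ⟪c, p⟫ ≤ ⟪c, v⟫) : p ∈ polyFace P c :=
  let ⟨z, hz, hzc⟩ := hP.exists_mem_polyVerts_mem_polyFace c
  ⟨hp, fun y hy => (h z hz).trans (hzc.2 y hy)⟩

lemma exists_polyFace_eq_singleton (hP : IsPolytope P) (hp : p ∈ polyVerts P) :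
    ∃ c, polyFace P c = {p} := by
  obtain ⟨s, -, rfl⟩ := hP
  have hpK : p ∉ convexHull ℝ ((s : Set (Esp d)) \ {p}) := fun h =>
    (convexHull_min (Set.sdiff_subset_sdiff_left (subset_convexHull ℝ _))
      ((convex_convexHull ℝ _).mem_extremePoints_iff_convex_sdiff.1 hp).2 h).2 rfl
  obtain ⟨f, u, hfp, hfK⟩ := geometric_hahn_banach_point_closed (convex_convexHull ℝ _)
    ((s.finite_toSet.sdiff).isCompact_convexHull ℝ).isClosed hpK
  set c := (InnerProductSpace.toDual ℝ (Esp d)).symm f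
  have hlt : ∀ v ∈ (s : Set (Esp d)), v ≠ p → ⟪c, p⟫ < ⟪c, v⟫ := fun v hv hvp => by
    simp only [c, InnerProductSpace.toDual_symm_apply]
    linarith [hfK v (subset_convexHull ℝ _ ⟨hv, hvp⟩)]
  have hpF : p ∈ polyFace (convexHull ℝ s) c := ⟨hp.1, fun x hx => by
    obtain ⟨v, hv, hvx⟩ := exists_inner_le_of_mem_convexHull hx c
    rcases eq_or_ne v p with rfl | hvp
    exacts [hvx, (hlt v hv hvp).le.trans hvx]⟩
  refine ⟨c, Set.Subset.antisymm ?_ (Set.singleton_subset_iff.2 hpF)⟩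
  -- Krein–Milman: the face is spanned by its extreme points, which are generators, hence `p`
  have hext : (polyFace (convexHull ℝ s) c).extremePoints ℝ ⊆ {p} := fun x hx => by
    have hxs := extremePoints_convexHull_subset
      ((isExtreme_polyFace _ c).extremePoints_subset_extremePoints hx)
    by_contra hxp
    exact (hlt x hxs hxp).not_ge (hx.1.2 p hpF.1)
  have hexp := isExposed_polyFace (convexHull ℝ (s : Set (Esp d))) c
  rw [← closure_convexHull_extremePoints (hexp.isCompact (s.finite_toSet.isCompact_convexHull ℝ))
    (hexp.convex (convex_convexHull ℝ _))]
  exact (closure_mono (convexHull_mono hext)).trans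
    (by rw [convexHull_singleton, closure_singleton])

lemma exists_add_mem_polyVerts (hP : IsPolytope P) (hQ : IsPolytope Q) (hp : p ∈ polyVerts P) :
    ∃ q ∈ Q, p + q ∈ polyVerts (P + Q) := by
  obtain ⟨c, hc⟩ := hP.exists_polyFace_eq_singleton hp
  obtain ⟨q, hq⟩ := hQ.extremePoints_polyFace_nonempty c
  exact ⟨q, hq.1.1, add_mem_polyVerts_of_polyFace_eq_singleton hc hq⟩

end IsPolytope

section Partners

variable {d : ℕ} {P Q : Set (Esp d)}

def UniqueVertexPartner (P Q : Set (Esp d)) : Prop :=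
  ∀ p ∈ P, ∀ q ∈ Q, ∀ q' ∈ Q, p + q ∈ polyVerts (P + Q) → p + q' ∈ polyVerts (P + Q) → q = q'

/-- The normal fan of `P` refines that of `Q`: the normal cone `{c | p ∈ polyFace P c}` of each
vertex of `P` lies in the normal cone of `Q` at some point. -/
def NormalFanRefines (P Q : Set (Esp d)) : Prop :=
  ∀ p ∈ polyVerts P, ∃ q ∈ Q, ∀ c, p ∈ polyFace P c → q ∈ polyFace Q c

theorem IsPolytope.f0_eq_f0_add_iff (hP : IsPolytope P) (hQ : IsPolytope Q) :
    f0 P = f0 (P + Q) ↔ UniqueVertexPartner P Q := by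
  set S := {x : Esp d × Esp d | x.1 ∈ P ∧ x.2 ∈ Q ∧ x.1 + x.2 ∈ polyVerts (P + Q)}
  have hsum : Set.InjOn (fun x => x.1 + x.2) S := fun x hx y hy h =>
    let ⟨h₁, h₂⟩ := eq_of_add_mem_extremePoints hy.2.2 hx.1 hx.2.1 hy.1 hy.2.1 h
    Prod.ext h₁ h₂
  have hsum_image : (fun x => x.1 + x.2) '' S = polyVerts (P + Q) := by
    refine Set.Subset.antisymm (Set.image_subset_iff.2 fun x hx => hx.2.2) fun y hy => ?_
    obtain ⟨a, ha, b, hb, rfl⟩ := hy.1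
    exact ⟨(a, b), ⟨ha, hb, hy⟩, rfl⟩
  have hfst_image : Prod.fst '' S = polyVerts P := by
    refine Set.Subset.antisymm (Set.image_subset_iff.2 fun x hx =>
      mem_extremePoints_of_add_mem_extremePoints_left hx.2.2 hx.1 hx.2.1) fun p hp => ?_
    obtain ⟨q, hq, hpq⟩ := hP.exists_add_mem_polyVerts hQ hp
    exact ⟨(p, q), ⟨hp.1, hq, hpq⟩, rfl⟩
  have hS : S.Finite := .of_finite_image (hsum_image ▸ (hP.add hQ).finite_polyVerts) hsum
  rw [f0, f0, ← hfst_image, ← hsum_image, hsum.ncard_image, Set.ncard_image_iff hS]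
  constructor
  · intro h p hp q hq q' hq' hpq hpq'
    exact congrArg Prod.snd
      (h (show (p, q) ∈ S from ⟨hp, hq, hpq⟩) (show (p, q') ∈ S from ⟨hp, hq', hpq'⟩) rfl)
  · rintro h ⟨p, q⟩ ⟨hp, hq, hpq⟩ ⟨p', q'⟩ ⟨-, hq', hpq'⟩ (rfl : p = p')
    rw [h p hp q hq q' hq' hpq hpq']

lemma normalFanRefines_smul_add {α : ℝ} (hα : 0 < α) (Q R : Set (Esp d)) :
    NormalFanRefines (α • Q + R) Q := by
  intro p hp
  obtain ⟨_, ⟨w, hw, rfl⟩, r, hr, rfl⟩ := hp.1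
  refine ⟨w, hw, fun c hc => ?_⟩
  rw [polyFace_add] at hc
  obtain ⟨x, hx, r', hr', hxr⟩ := hc
  obtain ⟨rfl, -⟩ :=
    eq_of_add_mem_extremePoints hp hx.1 hr'.1 (Set.smul_mem_smul_set hw) hr hxr
  exact mem_polyFace_of_smul_mem hα hx

theorem NormalFanRefines.uniqueVertexPartner (hP : IsPolytope P) (hQ : IsPolytope Q)
    (h : NormalFanRefines P Q) : UniqueVertexPartner P Q := by
  intro p hp q hq q' hq' hpq hpq'
  obtain ⟨q₀, -, hq₀⟩ := h p (mem_extremePoints_of_add_mem_extremePoints_left hpq hp hq)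
  suffices ∀ q ∈ Q, p + q ∈ polyVerts (P + Q) → q₀ = q from
    (this q hq hpq).symm.trans (this q' hq' hpq')
  intro q hq hpq
  obtain ⟨c, hc⟩ := (hP.add hQ).exists_polyFace_eq_singleton hpq
  obtain ⟨hPc, hQc⟩ := polyFace_eq_singleton_of_add hc hp hq
  have := hq₀ c (hPc ▸ rfl)
  rwa [hQc] at this

theorem UniqueVertexPartner.normalFanRefines (hP : IsPolytope P) (hQ : IsPolytope Q)
    (h : UniqueVertexPartner P Q) : NormalFanRefines P Q := by
  intro p hp
  obtain ⟨c₀, hc₀⟩ := hP.exists_polyFace_eq_singleton hp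
  obtain ⟨q, hq⟩ := hQ.extremePoints_polyFace_nonempty c₀
  refine ⟨q, hq.1.1, fun c hpc => mem_polyFace_of_forall_pos (c₀ := c₀) fun ε hε => ?_⟩
  -- `c + ε • c₀` still exposes `p`, so any extreme point of the corresponding face of `Q` is a
  -- partner of `p`, hence equal to `q`
  have hpε : polyFace P (c + ε • c₀) = {p} := by
    rw [polyFace_add_eq_inter hpc (by rw [polyFace_smul hε, hc₀]; rfl), polyFace_smul hε, hc₀,
      Set.inter_eq_right.2 (Set.singleton_subset_iff.2 hpc)]
  obtain ⟨q', hq'⟩ := hQ.extremePoints_polyFace_nonempty (c + ε • c₀)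
  obtain rfl := h p hp.1 q' hq'.1.1 q hq.1.1 (add_mem_polyVerts_of_polyFace_eq_singleton hpε hq')
    (add_mem_polyVerts_of_polyFace_eq_singleton hc₀ hq)
  exact hq'.1

lemma IsPolytope.exists_pos_smul_inner_sub_le (hP : IsPolytope P) {q : Esp d → Esp d}
    (hqQ : ∀ p ∈ polyVerts P, q p ∈ Q)
    (hq : ∀ p ∈ polyVerts P, ∀ c, p ∈ polyFace P c → q p ∈ polyFace Q c) :
    ∃ α > 0, ∀ p ∈ polyVerts P, ∀ z ∈ polyVerts P, ∀ c, z ∈ polyFace P c →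
      α * ⟪c, q p - q z⟫ ≤ ⟪c, p - z⟫ := by
  classical
  have hfin := hP.finite_polyVerts
  have hpair : ∀ x ∈ polyVerts P ×ˢ polyVerts P, ∀ᶠ β in Filter.atTop, ∀ c,
      x.2 ∈ polyFace P c → ⟪c, q x.1 - q x.2⟫ ≤ β * ⟪c, x.1 - x.2⟫ := by
    rintro ⟨p, z⟩ ⟨hp, hz⟩
    set t := hfin.toFinset.image (p - ·)
    have hmem : q p - q z ∈ PointedCone.hull ℝ (t : Set (Esp d)) :=
      PointedCone.mem_hull_of_forall_inner_nonpos fun c hc => by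
        have hpc : p ∈ polyFace P c := hP.mem_polyFace_of_forall_polyVerts hp.1 fun v hv => by
          simpa [inner_sub_right] using hc (p - v) (by simp [t, hv])
        simpa [inner_sub_right] using (hq p hp c hpc).2 (q z) (hqQ z hz)
    filter_upwards [PointedCone.eventually_inner_le_mul_of_mem_hull hmem] with β hβ c hzc
    refine hβ c _ (by simpa [inner_sub_right] using hzc.2 p hp.1) fun u hu => ?_
    obtain ⟨v, hv, rfl⟩ := Finset.mem_image.1 hu
    rw [inner_sub_right, inner_sub_right]
    linarith [hzc.2 v (hfin.mem_toFinset.1 hv).1]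
  obtain ⟨β, hβ, hβpos⟩ :=
    (((Filter.eventually_all_finite (hfin.prod hfin)).2 hpair).and
      (Filter.eventually_gt_atTop 0)).exists
  refine ⟨β⁻¹, inv_pos.2 hβpos, fun p hp z hz c hzc => ?_⟩
  rw [inv_mul_le_iff₀ hβpos]
  exact hβ (p, z) ⟨hp, hz⟩ c hzc

theorem NormalFanRefines.exists_eq_smul_add (hP : IsPolytope P) (hQ : IsPolytope Q)
    (h : NormalFanRefines P Q) :
    ∃ α : ℝ, 0 < α ∧ ∃ R : Set (Esp d), IsPolytope R ∧ P = α • Q + R := by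
  choose! q hqQ hq using h
  obtain ⟨α, hα, hkey⟩ := hP.exists_pos_smul_inner_sub_le hqQ hq
  set R := convexHull ℝ ((fun p => p - α • q p) '' polyVerts P)
  have hR : IsPolytope R := .of_finite (hP.finite_polyVerts.image _)
    ((hP.isCompact.extremePoints_nonempty hP.nonempty).image _)
  refine ⟨α, hα, R, hR, Set.Subset.antisymm ?_ ?_⟩
  · refine subset_of_forall_exists_inner_le ((hQ.convex.smul α).add hR.convex)
      ((hQ.isCompact.smul α).add hR.isCompact).isClosed fun c a ha => ?_
    obtain ⟨z, hz, hzc⟩ := hP.exists_mem_polyVerts_mem_polyFace c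
    refine ⟨α • q z + (z - α • q z), Set.add_mem_add (Set.smul_mem_smul_set (hqQ z hz))
      (subset_convexHull ℝ _ ⟨z, hz, rfl⟩), ?_⟩
    rw [add_sub_cancel]
    exact hzc.2 a ha
  · refine subset_of_forall_exists_inner_le hP.convex hP.isCompact.isClosed ?_
    rintro c _ ⟨_, ⟨y, hy, rfl⟩, r, hr, rfl⟩
    obtain ⟨z, hz, hzc⟩ := hP.exists_mem_polyVerts_mem_polyFace c
    obtain ⟨_, ⟨p, hp, rfl⟩, hpr⟩ := exists_inner_le_of_mem_convexHull hr c
    refine ⟨z, hzc.1, ?_⟩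
    have h₁ := hkey p hp z hz c hzc
    have h₂ := mul_le_mul_of_nonneg_left ((hq z hz c hzc).2 y hy) hα.le
    simp only [inner_add_right, inner_sub_right, real_inner_smul_right] at h₁ hpr ⊢
    linarith

end Partners

theorem stmt0 {d : ℕ} (P Q : Set (Esp d)) (hP : IsPolytope P) (hQ : IsPolytope Q) :
    (∃ α : ℝ, 0 < α ∧ ∃ R : Set (Esp d), IsPolytope R ∧ P = α • Q + R) ↔
      f0 P = f0 (P + Q) := by
  rw [hP.f0_eq_f0_add_iff hQ]
  constructor
  · rintro ⟨α, hα, R, -, rfl⟩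
    exact (normalFanRefines_smul_add hα Q R).uniqueVertexPartner hP hQ
  · exact fun h => (h.normalFanRefines hP hQ).exists_eq_smul_add hP hQ
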